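/- Let G = (V,E) be a simple graph and H = {H_v}_{v∈V} a family of groups. If K ⊆ M(G,H) is a subgroup of the partial group M(G,H) which, as a group under (x,y) ↦ Π(G,H)((x,y)), is finite and nontrivial, then there exists a unique v ∈ V such that K ⊆ H̃_v. -/

import Mathlib

set_option linter.unusedSectionVars false

open Monoid

namespace PaperPG

/-! ### Generic notions: letters, reduced / cyclically reduced words, reduced forms -/

section Letters

variable {ι : Type*} (H : ι → Type*) [∀ i, Group (H i)]

/-- A letter: a vertex/index together with an element of the corresponding group. -/
abbrev Ltr : Type _ := (i : ι) × H i

/-- A (combinatorially) reduced word: all letters are non-identity and adjacent letters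
belong to distinct factors. -/
def IsRed (l : List (Ltr H)) : Prop :=
  (∀ x ∈ l, x.2 ≠ 1) ∧ l.Chain' fun a b => a.1 ≠ b.1

/-- A cyclically reduced word: reduced, and if it has length at least `2`, its first and last
letters belong to distinct factors. -/
def IsCycRed (l : List (Ltr H)) : Prop :=
  IsRed H l ∧ ∀ a ∈ l.head?, ∀ b ∈ l.getLast?, 2 ≤ l.length → a.1 ≠ b.1

theorem isRed_nil : IsRed H ([] : List (Ltr H)) := by
  exact ⟨by simp, List.isChain_nil⟩

theorem isCycRed_nil : IsCycRed H ([] : List (Ltr H)) := by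
  refine ⟨isRed_nil H, ?_⟩
  simp

theorem isCycRed_single (x : Ltr H) (hx : x.2 ≠ 1) : IsCycRed H [x] := by
  refine ⟨⟨by simpa using hx, List.isChain_singleton x⟩, ?_⟩
  simp

variable [DecidableEq ι] [∀ i, DecidableEq (H i)]

/-- The element of the free product `∗_{i} H i` determined by a word. -/
noncomputable def listProd (l : List (Ltr H)) : CoprodI H :=
  (l.map fun x => CoprodI.of x.2).prod

/-- The reduced form of a word: the unique reduced word representing the product of its
letters in the free product `∗_i H i`. -/
noncomputable def red (l : List (Ltr H)) : List (Ltr H) :=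
  (CoprodI.Word.equiv (listProd H l)).toList

/-- The set of indices (vertices) occurring in a word. -/
def verts (l : List (Ltr H)) : Set ι := {i | ∃ x ∈ l, x.1 = i}

/-- The formal inverse of a word: invert every letter and reverse. -/
def rawInv (l : List (Ltr H)) : List (Ltr H) :=
  (l.map fun x => (⟨x.1, x.2⁻¹⟩ : Ltr H)).reverse

end Letters

/-! ### Homomorphisms of (the underlying data of) partial groups -/

/-- `f` is a homomorphism of partial groups, from the partial group with domain `D₁` and
product `P₁` to the one with domain `D₂` and product `P₂`. -/
def IsHom {M N : Type*} (D₁ : Set (List M)) (P₁ : List M → M)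
    (D₂ : Set (List N)) (P₂ : List N → N) (f : M → N) : Prop :=
  (∀ u ∈ D₁, u.map f ∈ D₂) ∧ ∀ u ∈ D₁, P₂ (u.map f) = f (P₁ u)

theorem isHom_id {M : Type*} (D : Set (List M)) (P : List M → M) : IsHom D P D P id := by
  constructor <;> intro u hu <;> simp [hu]

theorem IsHom.comp {M₁ M₂ M₃ : Type*} {D₁ : Set (List M₁)} {P₁ : List M₁ → M₁}
    {D₂ : Set (List M₂)} {P₂ : List M₂ → M₂} {D₃ : Set (List M₃)} {P₃ : List M₃ → M₃}
    {g : M₂ → M₃} {f : M₁ → M₂} (hg : IsHom D₂ P₂ D₃ P₃ g) (hf : IsHom D₁ P₁ D₂ P₂ f) :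
    IsHom D₁ P₁ D₃ P₃ (g ∘ f) := by
  refine ⟨fun u hu => ?_, fun u hu => ?_⟩
  · rw [← List.map_map]
    exact hg.1 _ (hf.1 u hu)
  · rw [← List.map_map, hg.2 _ (hf.1 u hu), hf.2 u hu]
    rfl

/-! ### The partial group `M(G, H)` associated to a decorated graph -/

section Graph

variable {ι : Type*} (H : ι → Type*) [∀ i, Group (H i)]
  [DecidableEq ι] [∀ i, DecidableEq (H i)] (G : SimpleGraph ι)

/-- Membership in `M(G,H)`: a cyclically reduced word whose set of vertices is a clique. -/
def Mem (l : List (Ltr H)) : Prop := IsCycRed H l ∧ G.IsClique (verts H l)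

theorem mem_nil : Mem H G [] := by
  refine ⟨isCycRed_nil H, ?_⟩
  simp [verts, SimpleGraph.isClique_iff, Set.Pairwise]

theorem mem_single (v : ι) (h : H v) (hne : h ≠ 1) : Mem H G [⟨v, h⟩] := by
  refine ⟨isCycRed_single H _ hne, ?_⟩
  simp only [verts, SimpleGraph.isClique_iff, Set.Pairwise, List.mem_singleton]
  rintro a ⟨x, hx, rfl⟩ b ⟨y, hy, rfl⟩ hne'
  subst hx; subst hy
  exact absurd rfl hne'

/-- A word with letters elements of `M(G,H)` is in the domain `D(G,H)` iff all its letters are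
elements of `M(G,H)`, all occurring vertices lie in a common clique, and the reduced form of
any subproduct `u_i ⋯ u_j` is cyclically reduced. -/
def InD (W : List (List (Ltr H))) : Prop :=
  (∀ u ∈ W, Mem H G u) ∧
  G.IsClique {i | ∃ u ∈ W, i ∈ verts H u} ∧
  ∀ i j : ℕ, i ≤ j → j < W.length →
    IsCycRed H (red H (((W.drop i).take (j + 1 - i)).flatten))

/-- The underlying set of the partial group `M(G,H)`. -/
def Carrier : Type _ := {l : List (Ltr H) // Mem H G l}

/-- The domain of the partial group `M(G,H)`. -/
def pgD : Set (List (Carrier H G)) := {W | InD H G (W.map Subtype.val)}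

/-- The unit of the partial group `M(G,H)`: the empty word. -/
def one : Carrier H G := ⟨[], mem_nil H G⟩

/-- The product map of the partial group `M(G,H)`: the reduced form of the concatenation
(junk value `1` outside of the domain). -/
noncomputable def pgPi (W : List (Carrier H G)) : Carrier H G := by
  classical exact if h : Mem H G (red H (W.map Subtype.val).flatten) then ⟨_, h⟩ else one H G

/-- The inversion of the partial group `M(G,H)` (junk value `1` if the result were not a
member, which never happens). -/
noncomputable def invCar (x : Carrier H G) : Carrier H G := by
  classical exact if h : Mem H G (rawInv H x.val) then ⟨_, h⟩ else one H G

/-- The subset `H̃ᵥ` of `M(G,H)`: the empty word together with the one-letter words with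
letter a nontrivial element of `H v`. -/
def Htilde (v : ι) : Set (Carrier H G) :=
  {x | x.val = [] ∨ ∃ h : H v, h ≠ 1 ∧ x.val = [⟨v, h⟩]}

end Graph

/-! ### Induced maps -/

section Induced

variable {ι ι' : Type*} (H : ι → Type*) [∀ i, Group (H i)]
  [DecidableEq ι] [∀ i, DecidableEq (H i)] (G : SimpleGraph ι)
  (H' : ι' → Type*) [∀ i, Group (H' i)]
  [DecidableEq ι'] [∀ i, DecidableEq (H' i)] (G' : SimpleGraph ι')

/-- The letterwise map on words induced by a map of vertices `fG` and group homomorphisms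
`fH v : H v →* H' (fG v)`. -/
def rawInduced (fG : ι → ι') (fH : ∀ i, H i →* H' (fG i)) (l : List (Ltr H)) :
    List (Ltr H') :=
  l.map fun x => ⟨fG x.1, fH x.1 x.2⟩

/-- The map `M(f_G, {f_v}) : M(G,H) → M(G',H')` (junk value `1` if the image word were not a
member; this never happens when the `fH v` are injective). -/
noncomputable def inducedCar (fG : ι → ι') (fH : ∀ i, H i →* H' (fG i))
    (x : Carrier H G) : Carrier H' G' := by
  classical exact if h : Mem H' G' (rawInduced H H' fG fH x.val) then ⟨_, h⟩ else one H' G'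

/-- A homomorphism of partial groups `M(G,H) → M(G',H')` has torsion-free kernel if the only
element of finite order (as an element of the ambient free product) sent to `1` is `1`. -/
def TFKer (f : Carrier H G → Carrier H' G') : Prop :=
  ∀ x : Carrier H G, f x = one H' G' → IsOfFinOrder (listProd H x.val) → x = one H G

end Induced

/-! ### Automorphism groups -/

section Aut

variable {ι : Type*} (H : ι → Type*) [∀ i, Group (H i)]
  [DecidableEq ι] [∀ i, DecidableEq (H i)] (G : SimpleGraph ι)

/-- The automorphism group of the partial group `M(G,H)`, as a subgroup of the permutation
group of its carrier: bijections that are homomorphisms in both directions. -/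
noncomputable def pgAut : Subgroup (Equiv.Perm (Carrier H G)) where
  carrier := {f | IsHom (pgD H G) (pgPi H G) (pgD H G) (pgPi H G) f ∧
    IsHom (pgD H G) (pgPi H G) (pgD H G) (pgPi H G) f.symm}
  one_mem' := ⟨isHom_id _ _, isHom_id _ _⟩
  mul_mem' := by
    rintro f g ⟨hf, hf'⟩ ⟨hg, hg'⟩
    exact ⟨hf.comp hg, hg'.comp hf'⟩
  inv_mem' := by
    rintro f ⟨hf, hf'⟩
    exact ⟨hf', by simpa [Equiv.Perm.inv_def] using hf⟩

/-- The automorphism group of a simple graph, as a subgroup of the permutation group of its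
vertices: bijections such that both the map and its inverse send edges to edges. -/
def graphAut : Subgroup (Equiv.Perm ι) where
  carrier := {σ | (∀ a b, G.Adj a b → G.Adj (σ a) (σ b)) ∧
    (∀ a b, G.Adj a b → G.Adj (σ.symm a) (σ.symm b))}
  one_mem' := ⟨fun a b h => h, fun a b h => h⟩
  mul_mem' := by
    rintro f g ⟨hf, hf'⟩ ⟨hg, hg'⟩
    exact ⟨fun a b h => hf _ _ (hg _ _ h), fun a b h => hg' _ _ (hf' _ _ h)⟩
  inv_mem' := by
    rintro f ⟨hf, hf'⟩
    exact ⟨hf', by simpa [Equiv.Perm.inv_def] using hf⟩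

/-- An automorphism `f` of `M(G,H)` covers the vertex map `σ` if for every vertex `v`,
`f` sends the nontrivial elements of `H̃ᵥ` into `H̃_{σ v}`. -/
def CoversVia (f : Carrier H G → Carrier H G) (σ : ι → ι) : Prop :=
  ∀ (v : ι) (h : H v) (hne : h ≠ 1),
    ∃ h' : H (σ v), h' ≠ 1 ∧ (f ⟨[⟨v, h⟩], mem_single H G v h hne⟩).val = [⟨σ v, h'⟩]

end Aut

/-! ### Subgroups and locally finite subgroups of partial groups -/

/-- A subset `N` is a subgroup of the partial group with data `(D, P, inv)`: it is closed
under inversion, every word with letters in `N` is in the domain `D`, and `P` maps such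
words into `N`. -/
def IsSubgroupOf {M : Type*} (D : Set (List M)) (P : List M → M) (inv : M → M)
    (N : Set M) : Prop :=
  (∀ x ∈ N, inv x ∈ N) ∧ ∀ W : List M, (∀ u ∈ W, u ∈ N) → W ∈ D ∧ P W ∈ N

/-- A subgroup `N` of a partial group is locally finite: every finite subset of `N` is
contained in a finite subgroup contained in `N` (i.e. every finitely generated subgroup of the
group `N` is finite). -/
def IsLocFinSubgroupOf {M : Type*} (D : Set (List M)) (P : List M → M) (inv : M → M)
    (N : Set M) : Prop :=
  IsSubgroupOf D P inv N ∧
    ∀ S : Set M, S ⊆ N → S.Finite →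
      ∃ K : Set M, S ⊆ K ∧ K ⊆ N ∧ IsSubgroupOf D P inv K ∧ K.Finite

end PaperPG

namespace PaperPG


section Aux

variable {ι : Type*} {H : ι → Type*} [∀ i, Group (H i)]
  [DecidableEq ι] [∀ i, DecidableEq (H i)] {G : SimpleGraph ι}

theorem red_eq_self {l : List (Ltr H)} (h : IsRed H l) : red H l = l := by
  have h1 : listProd H l = Monoid.CoprodI.Word.prod ⟨l, h.1, h.2⟩ := rfl
  have h2 : Monoid.CoprodI.Word.prod (⟨l, h.1, h.2⟩ : Monoid.CoprodI.Word H)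
      = (Monoid.CoprodI.Word.equiv (M := H)).symm ⟨l, h.1, h.2⟩ := rfl
  rw [red, h1, h2, Equiv.apply_symm_apply]

theorem isCycRed_append_self {l : List (Ltr H)} (h : IsCycRed H l) (h2 : 2 ≤ l.length) :
    IsCycRed H (l ++ l) := by
  obtain ⟨a, t, rfl⟩ : ∃ a t, l = a :: t := by
    cases l with
    | nil => simp at h2
    | cons a t => exact ⟨a, t, rfl⟩
  have hhead : ((a :: t) ++ (a :: t)).head? = some a := rfl
  have hlast : ((a :: t) ++ (a :: t)).getLast? = (a :: t).getLast? :=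
    List.getLast?_append_of_ne_nil _ (by simp)
  have hbd : ∀ x ∈ (a :: t).getLast?, ∀ y ∈ (a :: t).head?, x.1 ≠ y.1 := by
    intro x hx y hy
    exact (h.2 y hy x hx h2).symm
  refine ⟨⟨?_, ?_⟩, ?_⟩
  · intro x hx
    rcases List.mem_append.1 hx with hx | hx <;> exact h.1.1 x hx
  · exact List.isChain_append.2 ⟨h.1.2, h.1.2, hbd⟩
  · intro x hx y hy _
    rw [hhead] at hx
    rw [hlast] at hy
    cases hx
    exact h.2 a rfl y hy h2

theorem verts_append (l₁ l₂ : List (Ltr H)) :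
    verts H (l₁ ++ l₂) = verts H l₁ ∪ verts H l₂ := by
  ext i
  simp only [verts, Set.mem_setOf_eq, List.mem_append, Set.mem_union]
  constructor
  · rintro ⟨x, hx | hx, rfl⟩
    · exact Or.inl ⟨x, hx, rfl⟩
    · exact Or.inr ⟨x, hx, rfl⟩
  · rintro (⟨x, hx, rfl⟩ | ⟨x, hx, rfl⟩)
    · exact ⟨x, Or.inl hx, rfl⟩
    · exact ⟨x, Or.inr hx, rfl⟩

theorem mem_append_self {l : List (Ltr H)} (h : Mem H G l) (h2 : 2 ≤ l.length) :
    Mem H G (l ++ l) := by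
  refine ⟨isCycRed_append_self h.1 h2, ?_⟩
  rw [verts_append, Set.union_self]
  exact h.2

theorem pgPi_eq (W : List (Carrier H G)) (h : Mem H G (red H (W.map Subtype.val).flatten)) :
    pgPi H G W = ⟨_, h⟩ := by
  unfold pgPi
  exact dif_pos h

theorem val_eq_nil_iff (x : Carrier H G) : x = one H G ↔ x.val = [] := by
  constructor
  · rintro rfl; rfl
  · intro h; exact Subtype.ext h

theorem pgPi_sq {y : Carrier H G} (h2 : 2 ≤ y.val.length) :
    pgPi H G [y, y] = ⟨y.val ++ y.val, mem_append_self y.2 h2⟩ := by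
  have hflat : (([y, y].map Subtype.val).flatten : List (Ltr H)) = y.val ++ y.val := by
    show [y.val, y.val].flatten = _
    simp
  have hmem : Mem H G (red H ([y, y].map Subtype.val).flatten) := by
    rw [hflat, red_eq_self (isCycRed_append_self y.2.1 h2).1]
    exact mem_append_self y.2 h2
  rw [pgPi_eq _ hmem]
  apply Subtype.ext
  simp only
  rw [hflat, red_eq_self (isCycRed_append_self y.2.1 h2).1]

theorem len_le_one {K : Set (Carrier H G)}
    (hK : IsSubgroupOf (pgD H G) (pgPi H G) (invCar H G) K)
    (hfin : K.Finite) {x : Carrier H G} (hx : x ∈ K) : x.val.length ≤ 1 := by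
  by_contra hlen
  push_neg at hlen
  set f : Carrier H G → Carrier H G := fun y => pgPi H G [y, y] with hf
  have key : ∀ n, (f^[n] x) ∈ K ∧ (f^[n] x).val.length = 2 ^ n * x.val.length := by
    intro n
    induction n with
    | zero => simpa using hx
    | succ n ih =>
      have h2 : 2 ≤ (f^[n] x).val.length := by
        rw [ih.2]
        calc 2 ≤ x.val.length := hlen
          _ = 1 * x.val.length := (one_mul _).symm
          _ ≤ 2 ^ n * x.val.length := by
            exact Nat.mul_le_mul_right _ (Nat.one_le_two_pow)
      have hsq := pgPi_sq (G := G) h2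
      have hmemK : f (f^[n] x) ∈ K := by
        refine (hK.2 [f^[n] x, f^[n] x] ?_).2
        intro u hu
        simp only [List.mem_cons, List.not_mem_nil, or_false] at hu
        rcases hu with rfl | rfl <;> exact ih.1
      rw [Function.iterate_succ_apply']
      refine ⟨hmemK, ?_⟩
      show (f (f^[n] x)).val.length = _
      rw [hf]
      simp only
      rw [hsq]
      simp only [List.length_append, ih.2, pow_succ]
      ring
  have hinj : Function.Injective fun n => f^[n] x := by
    intro m n hmn
    have : 2 ^ m * x.val.length = 2 ^ n * x.val.length := by
      rw [← (key m).2, ← (key n).2]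
      exact congrArg (fun z : Carrier H G => z.val.length) hmn
    have hxpos : 0 < x.val.length := by omega
    have := Nat.eq_of_mul_eq_mul_right hxpos this
    exact Nat.pow_right_injective (le_refl 2) this
  exact absurd (Set.infinite_of_injective_forall_mem hinj fun n => (key n).1) hfin.not_infinite

end Aux

/-- Every finite nontrivial subgroup of the partial group `M(G,H)` is
contained in `H̃ᵥ` for a unique vertex `v`. -/
theorem statement11 {ι : Type*} (H : ι → Type*) [∀ i, Group (H i)]
    [DecidableEq ι] [∀ i, DecidableEq (H i)] (G : SimpleGraph ι)
    (K : Set (Carrier H G))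
    (hK : IsSubgroupOf (pgD H G) (pgPi H G) (invCar H G) K)
    (hfin : K.Finite) (hnt : ∃ x ∈ K, x ≠ one H G) :
    ∃! v : ι, K ⊆ Htilde H G v := by
  obtain ⟨x₀, hx₀K, hx₀ne⟩ := hnt
  have hlen1 : ∀ y ∈ K, y.val.length ≤ 1 := fun y hy => len_le_one hK hfin hy
  have hx₀nil : x₀.val ≠ [] := fun h => hx₀ne ((val_eq_nil_iff x₀).2 h)
  obtain ⟨a, ha⟩ : ∃ a, x₀.val = [a] := by
    have := hlen1 x₀ hx₀K
    cases hl : x₀.val with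
    | nil => exact absurd hl hx₀nil
    | cons a t =>
      refine ⟨a, ?_⟩
      rw [hl] at this
      simp only [List.length_cons] at this
      have ht : t = [] := List.eq_nil_of_length_eq_zero (by omega)
      rw [ht]
  -- every one-letter element of K has vertex a.1
  have hsame : ∀ y ∈ K, ∀ b, y.val = [b] → b.1 = a.1 := by
    intro y hy b hb
    by_contra hne
    have hW := hK.2 [x₀, y] (by
      intro u hu
      simp only [List.mem_cons, List.not_mem_nil, or_false] at hu
      rcases hu with rfl | rfl <;> assumption)
    have hflat : (([x₀, y].map Subtype.val).flatten : List (Ltr H)) = [a, b] := by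
      show [x₀.val, y.val].flatten = _
      simp [ha, hb]
    have hred : IsRed H [a, b] := by
      refine ⟨?_, ?_⟩
      · intro z hz
        simp only [List.mem_cons, List.not_mem_nil, or_false] at hz
        rcases hz with rfl | rfl
        · exact x₀.2.1.1.1 z (ha ▸ List.mem_singleton_self z)
        · exact y.2.1.1.1 z (hb ▸ List.mem_singleton_self z)
      · exact List.isChain_cons_cons.2 ⟨fun h => hne h.symm, List.isChain_singleton b⟩
    have hclique : G.IsClique (verts H [a, b]) := by
      have hWD := hW.1
      have hbig : G.IsClique {i | ∃ u ∈ ([x₀, y].map Subtype.val), i ∈ verts H u} :=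
        hWD.2.1
      refine hbig.subset ?_
      intro i hi
      obtain ⟨z, hz, rfl⟩ := hi
      simp only [List.mem_cons, List.not_mem_nil, or_false] at hz
      rcases hz with rfl | rfl
      · exact ⟨x₀.val, by show x₀.val ∈ [x₀.val, y.val]; simp, ⟨z, ha ▸ List.mem_singleton_self z, rfl⟩⟩
      · exact ⟨y.val, by show y.val ∈ [x₀.val, y.val]; simp, ⟨z, hb ▸ List.mem_singleton_self z, rfl⟩⟩
    have hmem2 : Mem H G (red H ([x₀, y].map Subtype.val).flatten) := by
      rw [hflat, red_eq_self hred]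
      refine ⟨⟨hred, ?_⟩, hclique⟩
      intro p hp q hq _
      cases hp
      have : b = q := by simpa using hq
      subst this
      exact fun h => hne h.symm
    have := (hK.2 [x₀, y] (by
      intro u hu
      simp only [List.mem_cons, List.not_mem_nil, or_false] at hu
      rcases hu with rfl | rfl <;> assumption)).2
    rw [pgPi_eq _ hmem2] at this
    have hl2 := hlen1 _ this
    simp only [hflat, red_eq_self hred] at hl2
    simp at hl2
  refine ⟨a.1, ?_, ?_⟩
  · intro y hy
    rcases Nat.le_one_iff_eq_zero_or_eq_one.1 (hlen1 y hy) with h0 | h1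
    · exact Or.inl (List.eq_nil_of_length_eq_zero h0)
    · obtain ⟨b, hb⟩ : ∃ b, y.val = [b] := by
        cases hl : y.val with
        | nil => rw [hl] at h1; simp at h1
        | cons c t =>
          rw [hl] at h1
          simp only [List.length_cons] at h1
          exact ⟨c, by rw [List.eq_nil_of_length_eq_zero (by omega : t.length = 0)]⟩
      obtain ⟨w, g⟩ := b
      have hw : w = a.1 := hsame y hy ⟨w, g⟩ hb
      subst hw
      refine Or.inr ⟨g, ?_, hb⟩
      exact y.2.1.1.1 ⟨a.1, g⟩ (hb ▸ List.mem_singleton_self _)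
  · intro v hv
    rcases hv hx₀K with h | ⟨h, hne, heq⟩
    · exact absurd h hx₀nil
    · rw [ha] at heq
      have : a = ⟨v, h⟩ := by injection heq
      rw [this]

end PaperPG
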